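/- Let X and A be finite nonempty sets, ρ a probability distribution on X, and πref a reference policy with πref(a|x) > 0 for all x, a. Let β > 0, η > 0, T ≥ 1 an integer, r̂¹, …, r̂ᵀ : X×A → [−1, 1], and let π¹, π², …, π^{T+1} be policies with π¹ = πref and πᵗ(a|x) > 0 for all t, x, a. Define f_mix(z) := (1/2)(z−1)² + z·log z and φ(z) := z + log z; for a probability vector p on A define g_x(p) := β·Σ_a πref(a|x)·f_mix(p(a)/πref(a|x)) and the Bregman divergence B_x(p,q) := (1/β)·(g_x(p) − g_x(q)) − Σ_a φ(q(a)/πref(a|x))·(p(a) − q(a)); define Gᵗ(π, x, a) := β·( (1 + 1/η)·φ(π(a|x)/πref(a|x)) − (1/η)·φ(πᵗ(a|x)/πref(a|x)) ) and r̂ᵗ(π) := Σ_x ρ(x) Σ_a π(a|x)·r̂ᵗ(x,a). Then for every C ≥ 0 and every policy π satisfying Σ_a π(a|x)²/πref(a|x) ≤ C for all x ∈ X, one has (1/T)·Σ_{t=1}^{T} ( r̂ᵗ(π) − r̂ᵗ(πᵗ) ) ≤ 2βC/(ηT) + 2βC − (1/T)·Σ_{t=1}^{T+1} Σ_x ρ(x)·g_x(πᵗ(·|x))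 + η/(2β) + (1/T)·Σ_{t=1}^{T} Σ_x ρ(x) Σ_a ( r̂ᵗ(x,a) − Gᵗ(π^{t+1}, x, a) )·( π(a|x) − π^{t+1}(a|x) ). -/

import Mathlib

/-- The χPO link function `φ(z) = z + log z`. -/
noncomputable def phi (z : ℝ) : ℝ := z + Real.log z

/-- The function `f_mix(z) = (1/2)(z − 1)² + z·log z` inducing the mixed χ²-KL divergence. -/
noncomputable def fmix (z : ℝ) : ℝ := (1 / 2) * (z - 1) ^ 2 + z * Real.log z

lemma fmix_one : fmix 1 = 0 := by simp [fmix]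

lemma klpt (p q : ℝ) (hp : 0 ≤ p) (hq : 0 < q) :
    p - q ≤ p * (Real.log p - Real.log q) := by
  rcases eq_or_lt_of_le hp with h | h
  · simp [← h]; positivity
  · have hl := Real.log_le_sub_one_of_pos (div_pos hq h)
    rw [Real.log_div hq.ne' h.ne'] at hl
    have := mul_le_mul_of_nonneg_left hl h.le
    have he : p * (q / p - 1) = q - p := by field_simp
    nlinarith

lemma gpoint (u p q : ℝ) (hu : 0 < u) (hp : 0 ≤ p) (hq : 0 < q) :
    u * fmix (q / u) + phi (q / u) * (p - q) + (p - q) ^ 2 / (2 * u) ≤ u * fmix (p / u) := by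
  obtain ⟨z, hz0, rfl⟩ : ∃ z, 0 ≤ z ∧ p = u * z := ⟨p / u, div_nonneg hp hu.le, by field_simp⟩
  obtain ⟨w, hw0, rfl⟩ : ∃ w, 0 < w ∧ q = u * w :=
    ⟨q / u, div_pos hq hu, by field_simp⟩
  rw [mul_div_cancel_left₀ _ hu.ne', mul_div_cancel_left₀ _ hu.ne']
  have hk := klpt z w hz0 hw0
  have hk' := mul_le_mul_of_nonneg_left hk hu.le
  have he : (u * z - u * w) ^ 2 / (2 * u) = u * (z - w) ^ 2 / 2 := by
    field_simp
  rw [he]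
  simp only [fmix, phi]
  nlinarith [hk']

lemma fmpt (u p : ℝ) (hu : 0 < u) (hp : 0 ≤ p) :
    u * fmix (p / u) ≤ (3 / 2) * (p ^ 2 / u) - 2 * p + u / 2 := by
  obtain ⟨z, hz0, rfl⟩ : ∃ z, 0 ≤ z ∧ p = u * z := ⟨p / u, div_nonneg hp hu.le, by field_simp⟩
  rw [mul_div_cancel_left₀ _ hu.ne']
  have he : (3 / 2) * ((u * z) ^ 2 / u) = (3 / 2) * (u * z ^ 2) := by
    field_simp
  rw [he]
  rcases eq_or_lt_of_le hz0 with h | h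
  · simp [fmix, ← h]; nlinarith
  · have hl := Real.log_le_sub_one_of_pos h
    simp only [fmix]
    nlinarith [mul_le_mul_of_nonneg_left hl (mul_nonneg hu.le hz0)]

lemma keypt (β η u r pi pt pt1 : ℝ) (hβ : 0 < β) (hη : 0 < η) (hu : 0 < u)
    (hr : |r| ≤ 1) (hπ : 0 ≤ pi) (hpt : 0 < pt) (hpt1 : 0 < pt1) :
    pi * r - pt * r
      - (r - β * ((1 + 1 / η) * phi (pt1 / u) - (1 / η) * phi (pt / u))) * (pi - pt1)
      ≤ η / (2 * β) * u + β * (u * fmix (pi / u)) - β * (u * fmix (pt1 / u))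
        + (β / η) * ((u * fmix (pi / u) - u * fmix (pt / u) - phi (pt / u) * (pi - pt))
            - (u * fmix (pi / u) - u * fmix (pt1 / u) - phi (pt1 / u) * (pi - pt1))) := by
  have h1 := gpoint u pi pt1 hu hπ hpt1
  have h2 := gpoint u pt1 pt hu hpt1.le hpt
  -- r * (pt1 - pt) ≤ η/(2β)*u + β/(2η) * ((pt1-pt)^2/u)
  have habs : r * (pt1 - pt) ≤ |pt1 - pt| := by
    calc r * (pt1 - pt) ≤ |r * (pt1 - pt)| := le_abs_self _
    _ = |r| * |pt1 - pt| := abs_mul _ _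
    _ ≤ 1 * |pt1 - pt| := mul_le_mul_of_nonneg_right hr (abs_nonneg _)
    _ = |pt1 - pt| := one_mul _
  have h3 : r * (pt1 - pt) ≤ η / (2 * β) * u + β / (2 * η) * ((pt1 - pt) ^ 2 / u) := by
    rw [← sq_abs (pt1 - pt)]
    set d := |pt1 - pt| with hd
    have hkey : η / (2 * β) * u + β / (2 * η) * (d ^ 2 / u) - d
        = (η * u - β * d) ^ 2 / (2 * β * η * u) := by
      field_simp
      ring
    have hpos : (0:ℝ) ≤ (η * u - β * d) ^ 2 / (2 * β * η * u) := by positivity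
    linarith
  have H1 : 0 ≤ β * (u * fmix (pi / u) - u * fmix (pt1 / u) - phi (pt1 / u) * (pi - pt1)) := by
    have hsq : 0 ≤ (pi - pt1) ^ 2 / (2 * u) := by positivity
    nlinarith
  have H2 : (β / η) * ((pt1 - pt) ^ 2 / (2 * u))
      ≤ (β / η) * (u * fmix (pt1 / u) - u * fmix (pt / u) - phi (pt / u) * (pt1 - pt)) := by
    apply mul_le_mul_of_nonneg_left _ (by positivity)
    linarith
  have H2' : β / (2 * η) * ((pt1 - pt) ^ 2 / u)
      ≤ β / η * (u * fmix (pt1 / u) - u * fmix (pt / u) - phi (pt / u) * (pt1 - pt)) := by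
    calc β / (2 * η) * ((pt1 - pt) ^ 2 / u) = (β / η) * ((pt1 - pt) ^ 2 / (2 * u)) := by ring
    _ ≤ _ := H2
  have e : η / (2 * β) * u + β * (u * fmix (pi / u)) - β * (u * fmix (pt1 / u))
        + (β / η) * ((u * fmix (pi / u) - u * fmix (pt / u) - phi (pt / u) * (pi - pt))
            - (u * fmix (pi / u) - u * fmix (pt1 / u) - phi (pt1 / u) * (pi - pt1)))
      - (pi * r - pt * r
          - (r - β * ((1 + 1 / η) * phi (pt1 / u) - (1 / η) * phi (pt / u))) * (pi - pt1))
      = (η / (2 * β) * u + β / (2 * η) * ((pt1 - pt) ^ 2 / u) - r * (pt1 - pt))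
        + (β / η * (u * fmix (pt1 / u) - u * fmix (pt / u) - phi (pt / u) * (pt1 - pt))
            - β / (2 * η) * ((pt1 - pt) ^ 2 / u))
        + β * (u * fmix (pi / u) - u * fmix (pt1 / u) - phi (pt1 / u) * (pi - pt1)) := by
    ring
  linarith [H1, H2', h3, e]

noncomputable def Dg {A : Type*} [Fintype A] (u pi q : A → ℝ) : ℝ :=
  ∑ a, (u a * fmix (pi a / u a) - u a * fmix (q a / u a) - phi (q a / u a) * (pi a - q a))

lemma Dg_nonneg {A : Type*} [Fintype A] (u pi q : A → ℝ) (hu : ∀ a, 0 < u a)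
    (hπ : ∀ a, 0 ≤ pi a) (hq : ∀ a, 0 < q a) : 0 ≤ Dg u pi q := by
  refine Finset.sum_nonneg fun a _ => ?_
  have h := gpoint (u a) (pi a) (q a) (hu a) (hπ a) (hq a)
  have hua := hu a
  have : (0:ℝ) ≤ (pi a - q a) ^ 2 / (2 * u a) := by positivity
  linarith

lemma Dg_ref {A : Type*} [Fintype A] (u pi : A → ℝ) (hu : ∀ a, 0 < u a)
    (hus : ∑ a, u a = 1) (hπs : ∑ a, pi a = 1) :
    Dg u pi u = ∑ a, u a * fmix (pi a / u a) := by
  unfold Dg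
  have h1 : ∀ a : A, u a * fmix (pi a / u a) - u a * fmix (u a / u a)
      - phi (u a / u a) * (pi a - u a) = u a * fmix (pi a / u a) - (pi a - u a) := by
    intro a
    rw [div_self (hu a).ne']
    simp [fmix_one, phi]
  rw [Finset.sum_congr rfl fun a _ => h1 a, Finset.sum_sub_distrib,
    Finset.sum_sub_distrib, hus, hπs]
  ring

lemma cover_bound {A : Type*} [Fintype A] (u pi : A → ℝ) (hu : ∀ a, 0 < u a)
    (hus : ∑ a, u a = 1) (hπ : ∀ a, 0 ≤ pi a) (hπs : ∑ a, pi a = 1)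
    (C : ℝ) (hC : 0 ≤ C) (hcov : ∑ a, (pi a) ^ 2 / u a ≤ C) :
    ∑ a, u a * fmix (pi a / u a) ≤ 2 * C := by
  have h : ∑ a, u a * fmix (pi a / u a)
      ≤ ∑ a, ((3 / 2) * ((pi a) ^ 2 / u a) - 2 * pi a + u a / 2) :=
    Finset.sum_le_sum fun a _ => fmpt (u a) (pi a) (hu a) (hπ a)
  have h2 : ∑ a, ((3 / 2) * ((pi a) ^ 2 / u a) - 2 * pi a + u a / 2)
      = (3 / 2) * (∑ a, (pi a) ^ 2 / u a) - 2 * (∑ a, pi a) + (∑ a, u a) / 2 := by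
    rw [Finset.sum_add_distrib, Finset.sum_sub_distrib, ← Finset.mul_sum, ← Finset.mul_sum,
      ← Finset.sum_div]
  rw [h2, hπs, hus] at h
  nlinarith

lemma keysum {A : Type*} [Fintype A] (u : A → ℝ) (hu : ∀ a, 0 < u a) (hus : ∑ a, u a = 1)
    (β η : ℝ) (hβ : 0 < β) (hη : 0 < η)
    (r : A → ℝ) (hr : ∀ a, |r a| ≤ 1)
    (pi : A → ℝ) (hπ : ∀ a, 0 ≤ pi a)
    (pt pt1 : A → ℝ) (hpt : ∀ a, 0 < pt a) (hpt1 : ∀ a, 0 < pt1 a) :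
    (∑ a, pi a * r a) - (∑ a, pt a * r a)
      - ∑ a, (r a - β * ((1 + 1 / η) * phi (pt1 a / u a) - (1 / η) * phi (pt a / u a)))
          * (pi a - pt1 a)
      ≤ η / (2 * β) + β * (∑ a, u a * fmix (pi a / u a)) - β * (∑ a, u a * fmix (pt1 a / u a))
        + (β / η) * (Dg u pi pt - Dg u pi pt1) := by
  have key : ∀ a ∈ (Finset.univ : Finset A),
      pi a * r a - pt a * r a
        - (r a - β * ((1 + 1 / η) * phi (pt1 a / u a) - (1 / η) * phi (pt a / u a)))
            * (pi a - pt1 a)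
      ≤ η / (2 * β) * u a + β * (u a * fmix (pi a / u a)) - β * (u a * fmix (pt1 a / u a))
        + (β / η) * ((u a * fmix (pi a / u a) - u a * fmix (pt a / u a)
              - phi (pt a / u a) * (pi a - pt a))
            - (u a * fmix (pi a / u a) - u a * fmix (pt1 a / u a)
              - phi (pt1 a / u a) * (pi a - pt1 a))) :=
    fun a _ => keypt β η (u a) (r a) (pi a) (pt a) (pt1 a) hβ hη (hu a) (hr a) (hπ a)
      (hpt a) (hpt1 a)
  have hsum := Finset.sum_le_sum key
  calc (∑ a, pi a * r a) - (∑ a, pt a * r a)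
      - ∑ a, (r a - β * ((1 + 1 / η) * phi (pt1 a / u a) - (1 / η) * phi (pt a / u a)))
          * (pi a - pt1 a)
      = ∑ a, (pi a * r a - pt a * r a
        - (r a - β * ((1 + 1 / η) * phi (pt1 a / u a) - (1 / η) * phi (pt a / u a)))
            * (pi a - pt1 a)) := by
        rw [Finset.sum_sub_distrib, Finset.sum_sub_distrib]
    _ ≤ ∑ a, (η / (2 * β) * u a + β * (u a * fmix (pi a / u a))
          - β * (u a * fmix (pt1 a / u a))
        + (β / η) * ((u a * fmix (pi a / u a) - u a * fmix (pt a / u a)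
              - phi (pt a / u a) * (pi a - pt a))
            - (u a * fmix (pi a / u a) - u a * fmix (pt1 a / u a)
              - phi (pt1 a / u a) * (pi a - pt1 a)))) := hsum
    _ = η / (2 * β) + β * (∑ a, u a * fmix (pi a / u a))
          - β * (∑ a, u a * fmix (pt1 a / u a))
        + (β / η) * (Dg u pi pt - Dg u pi pt1) := by
        unfold Dg
        symm
        conv_lhs =>
          rw [show (η / (2 * β)) = ∑ a, η / (2 * β) * u a by
            rw [← Finset.mul_sum, hus, mul_one]]
          rw [← Finset.sum_sub_distrib, Finset.mul_sum, Finset.mul_sum, Finset.mul_sum,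
            ← Finset.sum_add_distrib, ← Finset.sum_sub_distrib, ← Finset.sum_add_distrib]

lemma icc_shift (n : ℕ) (f : ℕ → ℝ) :
    ∑ t ∈ Finset.Icc 1 n, f t = ∑ i ∈ Finset.range n, f (i + 1) := by
  rw [show Finset.Icc 1 n = Finset.Ico 1 (n + 1) by rw [Finset.Ico_add_one_right_eq_Icc],
    Finset.sum_Ico_eq_sum_range]
  simp [add_comm]

lemma icc_tel (n : ℕ) (W : ℕ → ℝ) :
    ∑ t ∈ Finset.Icc 1 n, (W t - W (t + 1)) = W 1 - W (n + 1) := by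
  rw [icc_shift]
  exact Finset.sum_range_sub' (fun i => W (i + 1)) n

lemma icc_split (n : ℕ) (f : ℕ → ℝ) :
    ∑ t ∈ Finset.Icc 1 (n + 1), f t = f 1 + ∑ t ∈ Finset.Icc 1 n, f (t + 1) := by
  rw [icc_shift, icc_shift, Finset.sum_range_succ']
  norm_num
  ring

lemma perx {A : Type*} [Fintype A] (u : A → ℝ) (hu : ∀ a, 0 < u a) (hus : ∑ a, u a = 1)
    (β η : ℝ) (hβ : 0 < β) (hη : 0 < η) (T : ℕ)
    (r : ℕ → A → ℝ) (hr : ∀ t ∈ Finset.Icc 1 T, ∀ a, |r t a| ≤ 1)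
    (p : ℕ → A → ℝ) (hp1 : p 1 = u)
    (hppos : ∀ t ∈ Finset.Icc 1 (T + 1), ∀ a, 0 < p t a)
    (C : ℝ) (hC : 0 ≤ C)
    (pi : A → ℝ) (hπ : ∀ a, 0 ≤ pi a) (hπs : ∑ a, pi a = 1)
    (hcov : ∑ a, (pi a) ^ 2 / u a ≤ C) :
    ∑ t ∈ Finset.Icc 1 T, ((∑ a, pi a * r t a) - (∑ a, p t a * r t a)
        - ∑ a, (r t a - β * ((1 + 1 / η) * phi (p (t + 1) a / u a)
            - (1 / η) * phi (p t a / u a))) * (pi a - p (t + 1) a))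
      ≤ 2 * β * C / η + 2 * β * C * (T : ℝ)
        - (∑ t ∈ Finset.Icc 1 (T + 1), β * ∑ a, u a * fmix (p t a / u a))
        + (T : ℝ) * (η / (2 * β)) := by
  have hmem : ∀ t ∈ Finset.Icc 1 T, t ∈ Finset.Icc 1 (T + 1) := by
    intro t ht
    rw [Finset.mem_Icc] at *
    omega
  have hmem' : ∀ t ∈ Finset.Icc 1 T, t + 1 ∈ Finset.Icc 1 (T + 1) := by
    intro t ht
    rw [Finset.mem_Icc] at *
    omega
  have hHπ2C : ∑ a, u a * fmix (pi a / u a) ≤ 2 * C :=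
    cover_bound u pi hu hus hπ hπs C hC hcov
  have step : ∀ t ∈ Finset.Icc 1 T,
      (∑ a, pi a * r t a) - (∑ a, p t a * r t a)
        - ∑ a, (r t a - β * ((1 + 1 / η) * phi (p (t + 1) a / u a)
            - (1 / η) * phi (p t a / u a))) * (pi a - p (t + 1) a)
      ≤ η / (2 * β) + β * (∑ a, u a * fmix (pi a / u a))
          - β * (∑ a, u a * fmix (p (t + 1) a / u a))
        + (β / η) * (Dg u pi (p t) - Dg u pi (p (t + 1))) := by
    intro t ht
    exact keysum u hu hus β η hβ hη (r t) (hr t ht) pi hπ (p t) (p (t + 1))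
      (hppos t (hmem t ht)) (hppos (t + 1) (hmem' t ht))
  calc ∑ t ∈ Finset.Icc 1 T, ((∑ a, pi a * r t a) - (∑ a, p t a * r t a)
        - ∑ a, (r t a - β * ((1 + 1 / η) * phi (p (t + 1) a / u a)
            - (1 / η) * phi (p t a / u a))) * (pi a - p (t + 1) a))
      ≤ ∑ t ∈ Finset.Icc 1 T, (η / (2 * β) + β * (∑ a, u a * fmix (pi a / u a))
          - β * (∑ a, u a * fmix (p (t + 1) a / u a))
        + (β / η) * (Dg u pi (p t) - Dg u pi (p (t + 1)))) := Finset.sum_le_sum step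
    _ = (T : ℝ) * (η / (2 * β) + β * (∑ a, u a * fmix (pi a / u a)))
        - ∑ t ∈ Finset.Icc 1 T, β * (∑ a, u a * fmix (p (t + 1) a / u a))
        + (β / η) * (Dg u pi (p 1) - Dg u pi (p (T + 1))) := by
      rw [Finset.sum_add_distrib, Finset.sum_sub_distrib, Finset.sum_const, Nat.card_Icc,
        ← Finset.mul_sum, ← Finset.mul_sum, icc_tel]
      simp only [nsmul_eq_mul, Nat.add_sub_cancel]
    _ ≤ 2 * β * C / η + 2 * β * C * (T : ℝ)
        - (∑ t ∈ Finset.Icc 1 (T + 1), β * ∑ a, u a * fmix (p t a / u a))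
        + (T : ℝ) * (η / (2 * β)) := by
      have hW1 : Dg u pi (p 1) = ∑ a, u a * fmix (pi a / u a) := by
        rw [hp1]; exact Dg_ref u pi hu hus hπs
      have hWT1 : 0 ≤ Dg u pi (p (T + 1)) :=
        Dg_nonneg u pi (p (T + 1)) hu hπ
          (hppos (T + 1) (by rw [Finset.mem_Icc]; omega))
      have hH1 : (∑ a, u a * fmix (p 1 a / u a)) = 0 := by
        rw [hp1]
        refine Finset.sum_eq_zero fun a _ => ?_
        rw [div_self (hu a).ne', fmix_one, mul_zero]
      have hsplit : ∑ t ∈ Finset.Icc 1 (T + 1), β * ∑ a, u a * fmix (p t a / u a)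
          = ∑ t ∈ Finset.Icc 1 T, β * (∑ a, u a * fmix (p (t + 1) a / u a)) := by
        rw [icc_split (f := fun t => β * ∑ a, u a * fmix (p t a / u a)), hH1, mul_zero,
          zero_add]
      rw [hsplit, hW1]
      have hb2 : (T : ℝ) * (β * (∑ a, u a * fmix (pi a / u a))) ≤ (T : ℝ) * (β * (2 * C)) := by
        apply mul_le_mul_of_nonneg_left _ (Nat.cast_nonneg T)
        exact mul_le_mul_of_nonneg_left hHπ2C hβ.le
      have hb3 : (β / η) * (∑ a, u a * fmix (pi a / u a)) ≤ (β / η) * (2 * C) :=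
        mul_le_mul_of_nonneg_left hHπ2C (by positivity)
      have hb4 : 0 ≤ (β / η) * Dg u pi (p (T + 1)) := mul_nonneg (by positivity) hWT1
      have e1 : 2 * β * C / η = (β / η) * (2 * C) := by ring
      have e2 : 2 * β * C * (T : ℝ) = (T : ℝ) * (β * (2 * C)) := by ring
      nlinarith [hb2, hb3, hb4]

/-- Deterministic regret bound for the regularized mirror-descent iteration underlying
Iterative χPO for general preference models (Lemma G.1): for every `C ≥ 0` and every policy
`π` with per-context χ²-coverage at most `C`, the averaged regret of the iterates
`π¹, …, π^T` is bounded as stated. -/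
theorem mirror_descent_regret_bound
    {X A : Type*} [Fintype X] [Fintype A] [Nonempty X] [Nonempty A]
    (ρ : X → ℝ) (hρ : ∀ x, 0 ≤ ρ x) (hρsum : ∑ x, ρ x = 1)
    (pref : X → A → ℝ) (hpref : ∀ x a, 0 < pref x a)
    (hprefsum : ∀ x, ∑ a, pref x a = 1)
    (β η : ℝ) (hβ : 0 < β) (hη : 0 < η)
    (T : ℕ) (hT : 1 ≤ T)
    (rhat : ℕ → X → A → ℝ)
    (hrhat : ∀ t ∈ Finset.Icc 1 T, ∀ x a, rhat t x a ∈ Set.Icc (-1 : ℝ) 1)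
    (pseq : ℕ → X → A → ℝ)
    (hp1 : pseq 1 = pref)
    (hppos : ∀ t ∈ Finset.Icc 1 (T + 1), ∀ x a, 0 < pseq t x a)
    (hpsum : ∀ t ∈ Finset.Icc 1 (T + 1), ∀ x, ∑ a, pseq t x a = 1)
    (C : ℝ) (hC : 0 ≤ C)
    (pol : X → A → ℝ) (hpol : ∀ x a, 0 ≤ pol x a)
    (hpolsum : ∀ x, ∑ a, pol x a = 1)
    (hcov : ∀ x, ∑ a, (pol x a) ^ 2 / pref x a ≤ C) :
    (1 / (T : ℝ)) * ∑ t ∈ Finset.Icc 1 T,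
        ((∑ x, ρ x * ∑ a, pol x a * rhat t x a)
          - ∑ x, ρ x * ∑ a, pseq t x a * rhat t x a) ≤
      2 * β * C / (η * (T : ℝ)) + 2 * β * C
        - (1 / (T : ℝ)) * ∑ t ∈ Finset.Icc 1 (T + 1),
            ∑ x, ρ x * (β * ∑ a, pref x a * fmix (pseq t x a / pref x a))
        + η / (2 * β)
        + (1 / (T : ℝ)) * ∑ t ∈ Finset.Icc 1 T, ∑ x, ρ x * ∑ a,
            (rhat t x a
              - β * ((1 + 1 / η) * phi (pseq (t + 1) x a / pref x a)
                - (1 / η) * phi (pseq t x a / pref x a)))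
            * (pol x a - pseq (t + 1) x a) := by
  have main : ∀ x : X,
      ∑ t ∈ Finset.Icc 1 T, ((∑ a, pol x a * rhat t x a) - (∑ a, pseq t x a * rhat t x a)
          - ∑ a, (rhat t x a - β * ((1 + 1 / η) * phi (pseq (t + 1) x a / pref x a)
              - (1 / η) * phi (pseq t x a / pref x a))) * (pol x a - pseq (t + 1) x a))
        ≤ 2 * β * C / η + 2 * β * C * (T : ℝ)
          - (∑ t ∈ Finset.Icc 1 (T + 1), β * ∑ a, pref x a * fmix (pseq t x a / pref x a))
          + (T : ℝ) * (η / (2 * β)) := by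
    intro x
    exact perx (pref x) (hpref x) (hprefsum x) β η hβ hη T
      (fun t a => rhat t x a)
      (fun t ht a => abs_le.mpr ⟨(hrhat t ht x a).1, (hrhat t ht x a).2⟩)
      (fun t a => pseq t x a) (by funext a; show pseq 1 x a = pref x a; rw [hp1])
      (fun t ht a => hppos t ht x a) C hC (pol x) (hpol x) (hpolsum x) (hcov x)
  have key : ∑ x, ρ x * (∑ t ∈ Finset.Icc 1 T,
        ((∑ a, pol x a * rhat t x a) - (∑ a, pseq t x a * rhat t x a)
          - ∑ a, (rhat t x a - β * ((1 + 1 / η) * phi (pseq (t + 1) x a / pref x a)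
              - (1 / η) * phi (pseq t x a / pref x a))) * (pol x a - pseq (t + 1) x a)))
      ≤ ∑ x, ρ x * (2 * β * C / η + 2 * β * C * (T : ℝ)
          - (∑ t ∈ Finset.Icc 1 (T + 1), β * ∑ a, pref x a * fmix (pseq t x a / pref x a))
          + (T : ℝ) * (η / (2 * β))) :=
    Finset.sum_le_sum fun x _ => mul_le_mul_of_nonneg_left (main x) (hρ x)
  have Eq1 : ∑ x, ρ x * (∑ t ∈ Finset.Icc 1 T,
        ((∑ a, pol x a * rhat t x a) - (∑ a, pseq t x a * rhat t x a)
          - ∑ a, (rhat t x a - β * ((1 + 1 / η) * phi (pseq (t + 1) x a / pref x a)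
              - (1 / η) * phi (pseq t x a / pref x a))) * (pol x a - pseq (t + 1) x a)))
      = (∑ t ∈ Finset.Icc 1 T, ((∑ x, ρ x * ∑ a, pol x a * rhat t x a)
            - ∑ x, ρ x * ∑ a, pseq t x a * rhat t x a))
        - ∑ t ∈ Finset.Icc 1 T, ∑ x, ρ x * ∑ a,
            (rhat t x a - β * ((1 + 1 / η) * phi (pseq (t + 1) x a / pref x a)
              - (1 / η) * phi (pseq t x a / pref x a))) * (pol x a - pseq (t + 1) x a) := by
    rw [← Finset.sum_sub_distrib]
    rw [show ∀ (F : X → ℕ → ℝ), (∑ x, ρ x * ∑ t ∈ Finset.Icc 1 T, F x t)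
        = ∑ t ∈ Finset.Icc 1 T, ∑ x, ρ x * F x t from fun F => by
      simp only [Finset.mul_sum]; exact Finset.sum_comm]
    refine Finset.sum_congr rfl fun t _ => ?_
    rw [← Finset.sum_sub_distrib, ← Finset.sum_sub_distrib]
    exact Finset.sum_congr rfl fun x _ => by ring
  have Eq2 : ∑ x, ρ x * (2 * β * C / η + 2 * β * C * (T : ℝ)
          - (∑ t ∈ Finset.Icc 1 (T + 1), β * ∑ a, pref x a * fmix (pseq t x a / pref x a))
          + (T : ℝ) * (η / (2 * β)))
      = (2 * β * C / η + 2 * β * C * (T : ℝ) + (T : ℝ) * (η / (2 * β)))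
        - ∑ t ∈ Finset.Icc 1 (T + 1), ∑ x, ρ x
            * (β * ∑ a, pref x a * fmix (pseq t x a / pref x a)) := by
    have e : ∀ x, ρ x * (2 * β * C / η + 2 * β * C * (T : ℝ)
          - (∑ t ∈ Finset.Icc 1 (T + 1), β * ∑ a, pref x a * fmix (pseq t x a / pref x a))
          + (T : ℝ) * (η / (2 * β)))
        = (2 * β * C / η + 2 * β * C * (T : ℝ) + (T : ℝ) * (η / (2 * β))) * ρ x
          - ∑ t ∈ Finset.Icc 1 (T + 1), ρ x
              * (β * ∑ a, pref x a * fmix (pseq t x a / pref x a)) := by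
      intro x
      rw [show (∑ t ∈ Finset.Icc 1 (T + 1), ρ x
            * (β * ∑ a, pref x a * fmix (pseq t x a / pref x a)))
          = ρ x * ∑ t ∈ Finset.Icc 1 (T + 1),
              (β * ∑ a, pref x a * fmix (pseq t x a / pref x a)) from
        (Finset.mul_sum _ _ _).symm]
      ring
    rw [Finset.sum_congr rfl fun x _ => e x, Finset.sum_sub_distrib, ← Finset.mul_sum,
      hρsum, mul_one, Finset.sum_comm]
  rw [Eq1, Eq2] at key
  have hT0 : (0 : ℝ) < (T : ℝ) := by exact_mod_cast Nat.lt_of_lt_of_le Nat.zero_lt_one hT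
  have h2 := mul_le_mul_of_nonneg_left key (by positivity : (0:ℝ) ≤ 1 / (T : ℝ))
  have e3 : 2 * β * C / (η * (T : ℝ)) + 2 * β * C
        - (1 / (T : ℝ)) * ∑ t ∈ Finset.Icc 1 (T + 1),
            ∑ x, ρ x * (β * ∑ a, pref x a * fmix (pseq t x a / pref x a))
        + η / (2 * β)
        + (1 / (T : ℝ)) * ∑ t ∈ Finset.Icc 1 T, ∑ x, ρ x * ∑ a,
            (rhat t x a
              - β * ((1 + 1 / η) * phi (pseq (t + 1) x a / pref x a)
                - (1 / η) * phi (pseq t x a / pref x a)))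
            * (pol x a - pseq (t + 1) x a)
      = (1 / (T : ℝ)) * ((2 * β * C / η + 2 * β * C * (T : ℝ) + (T : ℝ) * (η / (2 * β)))
          - ∑ t ∈ Finset.Icc 1 (T + 1), ∑ x, ρ x
              * (β * ∑ a, pref x a * fmix (pseq t x a / pref x a)))
        + (1 / (T : ℝ)) * ∑ t ∈ Finset.Icc 1 T, ∑ x, ρ x * ∑ a,
            (rhat t x a
              - β * ((1 + 1 / η) * phi (pseq (t + 1) x a / pref x a)
                - (1 / η) * phi (pseq t x a / pref x a)))
            * (pol x a - pseq (t + 1) x a) := by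
    field_simp
    ring
  rw [e3]
  linarith [h2]
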